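/- For n ≥ 1 and r > 0, the boundary of the spherical tube M = {z ∈ ℂ^{n+1} : Σ_{h=1}^{n+1} (z_h + z̄_h)² = r²} is a smooth hypersurface which is Levi umbilical with constant Levi curvature H = 1/r: at every z ∈ M, h(X,Y) + h(JX,JY) = (2/r) ⟨X,Y⟩ for all X, Y in the horizontal space H_z. -/

import Mathlib

noncomputable section
open scoped BigOperators

/-- `ℂ^{n+1}`, identified with `ℝ^{2n+2}` via its real structure. -/
abbrev E (n : ℕ) : Type := EuclideanSpace ℂ (Fin (n + 1))

/-- The standard complex structure: multiplication by `i`. -/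
def J {n : ℕ} (v : E n) : E n := Complex.I • v

/-- The real inner product `⟨x, y⟩ = Re ⟪x, y⟫`. -/
def rI {n : ℕ} (x y : E n) : ℝ := (inner ℂ x y : ℂ).re

/-- The (real) tangent space at `p` of a hypersurface with unit normal `ν`. -/
def tangAt {n : ℕ} (ν : E n → E n) (p : E n) : Set (E n) := {X | rI (ν p) X = 0}

/-- `M` is a smooth embedded real hypersurface of `ℂ^{n+1}` (locally a regular zero
set of a smooth real function), oriented by the smooth unit normal field `ν`
(extended smoothly to the ambient space). -/
def IsHypersurface {n : ℕ} (M : Set (E n)) (ν : E n → E n) : Prop :=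
  ContDiff ℝ (⊤ : ℕ∞) ν ∧ (∀ p ∈ M, ‖ν p‖ = 1) ∧
    ∀ p ∈ M, ∃ (V : Set (E n)) (F : E n → ℝ), IsOpen V ∧ p ∈ V ∧
      ContDiffOn ℝ (⊤ : ℕ∞) F V ∧ (M ∩ V = {z ∈ V | F z = 0}) ∧
      ∀ z ∈ M ∩ V, ∀ X : E n, (fderiv ℝ F z X = 0 ↔ X ∈ tangAt ν z)

/-- The horizontal (maximal complex) subspace `H_p = {X ∈ T_pM : JX ∈ T_pM}`. -/
def horizAt {n : ℕ} (ν : E n → E n) (p : E n) : Set (E n) :=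
  {X | X ∈ tangAt ν p ∧ J X ∈ tangAt ν p}

/-- The second fundamental form `h(X,Y) = ⟨X, ∂_Y ν⟩`. -/
def sff {n : ℕ} (ν : E n → E n) (p : E n) (X Y : E n) : ℝ :=
  rI X (fderiv ℝ ν p Y)

/-- The family `X_1, …, X_n, J X_1, …, J X_n`. -/
def combined {n : ℕ} (X : Fin n → E n) : (Fin n ⊕ Fin n) → E n :=
  Sum.elim X (fun α => J (X α))

/-- `{X_1, …, X_n, J X_1, …, J X_n}` is an orthonormal basis of the horizontal
space at `p` (w.r.t. the real inner product). -/
def IsHorizONB {n : ℕ} (ν : E n → E n) (p : E n) (X : Fin n → E n) : Prop :=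
  (∀ α, X α ∈ horizAt ν p) ∧
  (∀ i j, rI (combined X i) (combined X j) = if i = j then 1 else 0) ∧
  (∀ Y ∈ horizAt ν p, Y ∈ Submodule.span ℝ (Set.range (combined X)))

/-- The boundary of the spherical tube `{z : Σ_h (z_h + z̄_h)² = r²}`. -/
def Msph (n : ℕ) (r : ℝ) : Set (E n) :=
  {z | ∑ h, (z h + (starRingEnd ℂ) (z h)) ^ 2 = (r : ℂ) ^ 2}

/-- The outward unit normal `ν(z) = ((2 Re z_h)/r)_h` of the spherical tube. -/
def nuT {n : ℕ} (r : ℝ) (z : E n) : E n :=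
  (WithLp.equiv 2 _).symm fun h => ((2 * (z h).re) / r : ℂ)

/-!
The normal field `ν(z) = (2/r) Re z` is real-linear, so `M = {‖ν z‖ = 1}` is a level set whose
defining function `‖ν z‖² - 1` has differential `2⟨ν z, ν ·⟩ = (4/r)⟨ν z, ·⟩`, and the
differential of `ν` is `ν` itself: `h(X, Y) = (2/r) Σ Re X_h Re Y_h`. Since `Re (J X) = -Im X`,
adding `h(JX, JY)` supplies the imaginary parts, giving `(2/r)⟨X, Y⟩` for all `X, Y`.
-/

section

variable {n : ℕ}

lemma rI_eq_sum (x y : E n) :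
    rI x y = ∑ h, ((x h).re * (y h).re + (x h).im * (y h).im) := by
  unfold rI
  rw [PiLp.inner_apply, Complex.re_sum]
  refine Finset.sum_congr rfl fun h _ => ?_
  simp only [RCLike.inner_apply, Complex.mul_re, Complex.conj_re, Complex.conj_im]
  ring

lemma rI_eq_inner (x y : E n) : rI x y = inner ℝ x y := by
  rw [rI_eq_sum, PiLp.inner_apply]
  refine Finset.sum_congr rfl fun h _ => ?_
  rw [Complex.inner]
  simp only [Complex.mul_re, Complex.conj_re, Complex.conj_im]
  ring

lemma J_apply_re (v : E n) (h : Fin (n + 1)) : (J v h).re = -(v h).im := by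
  simp [J]

lemma sff_of_continuousLinearMap (L : E n →L[ℝ] E n) (p X Y : E n) :
    sff L p X Y = rI X (L Y) := by
  rw [sff, L.fderiv]

/-- `hL` says `L* L = c L`; it identifies the kernel of `d‖L ·‖²` at `z` with `⟨L z, ·⟩ = 0`. -/
lemma isHypersurface_norm_sq_eq_one (L : E n →L[ℝ] E n) {c : ℝ} (hc : c ≠ 0)
    (hL : ∀ z X, rI (L z) (L X) = c * rI (L z) X) :
    IsHypersurface {z | ‖L z‖ ^ 2 = 1} L := by
  refine ⟨L.contDiff, fun p hp => (pow_eq_one_iff_of_nonneg (norm_nonneg _) two_ne_zero).mp hp,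
    fun p _ => ⟨Set.univ, fun z => ‖L z‖ ^ 2 - 1, isOpen_univ, trivial,
      ((L.contDiff.norm_sq ℝ).sub contDiff_const).contDiffOn, ?_, fun z _ X => ?_⟩⟩
  · ext z
    simp [sub_eq_zero]
  · have hF : fderiv ℝ (fun z => ‖L z‖ ^ 2 - 1) z X = 2 * c * rI (L z) X := by
      rw [(L.hasFDerivAt.norm_sq.sub_const 1).fderiv]
      simp only [FunLike.coe_smul, ContinuousLinearMap.coe_comp, Pi.smul_apply,
        Function.comp_apply, innerSL_apply_apply, nsmul_eq_mul, ← rI_eq_inner]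
      rw [hL, Nat.cast_ofNat, mul_assoc]
    rw [hF, tangAt, Set.mem_ofPred_eq, mul_eq_zero, or_iff_right (by positivity)]

end

section

variable {n : ℕ} (r : ℝ)

lemma nuT_apply (z : E n) (h : Fin (n + 1)) : nuT r z h = ((2 * (z h).re / r : ℝ) : ℂ) := by
  simp [nuT]

def nuTCLM : E n →L[ℝ] E n :=
  LinearMap.toContinuousLinearMap
    { toFun := nuT r
      map_add' := fun x y => by ext h; simp [nuT_apply]; ring
      map_smul' := fun c x => by ext h; simp [nuT_apply]; ring }

lemma coe_nuTCLM : ⇑(nuTCLM (n := n) r) = nuT r := rfl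

lemma rI_nuT_right (A B : E n) : rI A (nuT r B) = 2 / r * ∑ h, (A h).re * (B h).re := by
  rw [rI_eq_sum, Finset.mul_sum]
  refine Finset.sum_congr rfl fun h _ => ?_
  simp [nuT_apply]
  ring

lemma rI_nuT_left (A B : E n) : rI (nuT r A) B = 2 / r * ∑ h, (A h).re * (B h).re := by
  rw [rI_eq_sum, Finset.mul_sum]
  refine Finset.sum_congr rfl fun h _ => ?_
  simp [nuT_apply]
  ring

lemma rI_nuT_nuT (z X : E n) : rI (nuT r z) (nuT r X) = 2 / r * rI (nuT r z) X := by
  rw [rI_nuT_right, rI_nuT_left, Finset.mul_sum, Finset.mul_sum, Finset.mul_sum]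
  refine Finset.sum_congr rfl fun h _ => ?_
  simp only [nuT_apply, Complex.ofReal_re]
  ring

lemma norm_nuT_sq (z : E n) : ‖nuT r z‖ ^ 2 = (∑ h, (2 * (z h).re) ^ 2) / r ^ 2 := by
  rw [EuclideanSpace.norm_sq_eq, Finset.sum_div]
  refine Finset.sum_congr rfl fun h _ => ?_
  rw [nuT_apply, Complex.norm_real, Real.norm_eq_abs, sq_abs, div_pow]

lemma Msph_eq (hr : r ≠ 0) : Msph n r = {z | ‖nuT r z‖ ^ 2 = 1} := by
  ext z
  have hsum : ∑ h, (z h + (starRingEnd ℂ) (z h)) ^ 2 = ((∑ h, (2 * (z h).re) ^ 2 : ℝ) : ℂ) := by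
    push_cast
    simp [Complex.add_conj]
  rw [Msph, Set.mem_ofPred_eq, Set.mem_ofPred_eq, hsum, norm_nuT_sq,
    div_eq_one_iff_eq (by positivity), ← Complex.ofReal_pow, Complex.ofReal_inj]

lemma sff_nuT_add_sff_nuT_J (z X Y : E n) :
    sff (nuT r) z X Y + sff (nuT r) z (J X) (J Y) = 2 / r * rI X Y := by
  rw [← coe_nuTCLM, sff_of_continuousLinearMap, sff_of_continuousLinearMap, coe_nuTCLM,
    rI_nuT_right, rI_nuT_right, rI_eq_sum, ← mul_add, ← Finset.sum_add_distrib]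
  simp only [J_apply_re, neg_mul_neg]

end

theorem stmt18_general {n : ℕ} (r : ℝ) (hr : 0 < r) :
    IsHypersurface (Msph n r) (nuT r) ∧
    ∀ z ∈ Msph n r, ∀ X ∈ horizAt (nuT r) z, ∀ Y ∈ horizAt (nuT r) z,
      sff (nuT r) z X Y + sff (nuT r) z (J X) (J Y) = (2 / r) * rI X Y := by
  refine ⟨?_, fun z _ X _ Y _ => sff_nuT_add_sff_nuT_J r z X Y⟩
  rw [Msph_eq r hr.ne']
  exact isHypersurface_norm_sq_eq_one (nuTCLM r) (by positivity) (rI_nuT_nuT r)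

theorem stmt18 {n : ℕ} (hn : 1 ≤ n) (r : ℝ) (hr : 0 < r) :
    IsHypersurface (Msph n r) (nuT r) ∧
    ∀ z ∈ Msph n r, ∀ X ∈ horizAt (nuT r) z, ∀ Y ∈ horizAt (nuT r) z,
      sff (nuT r) z X Y + sff (nuT r) z (J X) (J Y) = (2 / r) * rI X Y :=
  stmt18_general r hr
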